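/- arXiv:2605.15670 — 2 statements merged into one kernel-verified Lean document; each statement's English description precedes it below -/
import Mathlib

section
/- A K-linear map P : R → R on the truncated polynomial algebra R = K ⊕ V is a Rota–Baxter operator of weight zero if and only if the image of P is contained in V and P² = 0. -/
open TrivSqZeroExt

/-!
Write `c(x)` for the `K`-component of `x`. Since `V · V = 0`, a product with a factor in `V` is
that factor scaled by the `K`-component of the other one. Comparing `K`-components in the
Rota–Baxter identity for `x = y = v ∈ V` gives `c(P v)² = 2 c(P v)²`, and for `x = y = 1` gives
`c(P 1)² = 2 c(P 1)²`, so `P` maps into `V`. Once it does, `P x * P y = 0` and the identity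
becomes `c(x) P(P y) + c(y) P(P x) = 0`; taking `x = 1` and then `y = 1` yields `P² = 0`
(here `2 ≠ 0` is needed), and conversely `P² = 0` makes both sides vanish.
-/

def IsRotaBaxterOfWeightZero {K A : Type*} [Semiring K] [NonUnitalNonAssocSemiring A]
    [Module K A] (P : A →ₗ[K] A) : Prop :=
  ∀ x y, P x * P y = P (x * P y + P x * y)

namespace TrivSqZeroExt

variable {R M : Type*} [CommSemiring R] [AddCommMonoid M] [Module R M] [Module Rᵐᵒᵖ M]

theorem mul_eq_smul_of_fst_eq_zero_right (a : TrivSqZeroExt R M) {b : TrivSqZeroExt R M}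
    (hb : b.fst = 0) : a * b = a.fst • b := by
  ext <;> simp [hb]

theorem mul_eq_smul_of_fst_eq_zero_left [IsCentralScalar R M] {a : TrivSqZeroExt R M}
    (ha : a.fst = 0) (b : TrivSqZeroExt R M) : a * b = b.fst • a := by
  ext <;> simp [ha, op_smul_eq_smul, mul_comm]

end TrivSqZeroExt

section RotaBaxter

variable {K M : Type*} [Field K] [AddCommGroup M] [Module K M]
  (P : TrivSqZeroExt K M →ₗ[K] TrivSqZeroExt K M)

theorem map_eq_fst_smul_map_one_add (x : TrivSqZeroExt K M) :
    P x = x.fst • P 1 + P (inr x.snd) := by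
  conv_lhs => rw [← inl_fst_add_inr_snd_eq x, ← mul_one x.fst, ← smul_eq_mul, inl_smul, inl_one]
  rw [map_add, map_smul]

variable [Module Kᵐᵒᵖ M] [IsCentralScalar K M]

theorem IsRotaBaxterOfWeightZero.fst_map_inr_eq_zero (hP : IsRotaBaxterOfWeightZero P)
    (u : M) : (P (inr u)).fst = 0 := by
  have h := congrArg fst (hP (inr u) (inr u))
  rw [mul_eq_smul_of_fst_eq_zero_right _ (fst_inr K u),
    mul_eq_smul_of_fst_eq_zero_left (fst_inr K u), ← add_smul, map_smul, fst_mul,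
    fst_smul, smul_eq_mul] at h
  exact mul_self_eq_zero.mp (by linear_combination -h)

theorem IsRotaBaxterOfWeightZero.fst_map_one_eq_zero (hP : IsRotaBaxterOfWeightZero P) :
    (P 1).fst = 0 := by
  have hPP : (P (P 1)).fst = (P 1).fst * (P 1).fst := by
    rw [map_eq_fst_smul_map_one_add P (P 1), fst_add, fst_smul, hP.fst_map_inr_eq_zero,
      smul_eq_mul, add_zero]
  have h := congrArg fst (hP 1 1)
  rw [one_mul, mul_one, map_add, fst_add, hPP, fst_mul] at h
  exact mul_self_eq_zero.mp (by linear_combination -h)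

theorem IsRotaBaxterOfWeightZero.fst_map_eq_zero (hP : IsRotaBaxterOfWeightZero P)
    (x : TrivSqZeroExt K M) : (P x).fst = 0 := by
  rw [map_eq_fst_smul_map_one_add P x, fst_add, fst_smul, hP.fst_map_one_eq_zero,
    hP.fst_map_inr_eq_zero, smul_zero, add_zero]

theorem map_mul_add_mul_map (hfst : ∀ x, (P x).fst = 0) (x y : TrivSqZeroExt K M) :
    P (x * P y + P x * y) = x.fst • P (P y) + y.fst • P (P x) := by
  rw [mul_eq_smul_of_fst_eq_zero_right _ (hfst y), mul_eq_smul_of_fst_eq_zero_left (hfst x),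
    map_add, map_smul, map_smul]

theorem IsRotaBaxterOfWeightZero.map_map_eq_zero [NeZero (2 : K)]
    (hP : IsRotaBaxterOfWeightZero P) (x : TrivSqZeroExt K M) : P (P x) = 0 := by
  have hfst := hP.fst_map_eq_zero
  have h y : P (P y) + y.fst • P (P 1) = 0 := by
    have := hP 1 y
    rwa [map_mul_add_mul_map P hfst, fst_one, one_smul,
      mul_eq_smul_of_fst_eq_zero_right _ (hfst y), hfst, zero_smul, eq_comm] at this
  have h1 : P (P 1) = 0 := by
    have := h 1
    rwa [fst_one, one_smul, ← two_smul K, smul_eq_zero, or_iff_right two_ne_zero] at this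
  simpa [h1] using h x

theorem isRotaBaxterOfWeightZero_of_fst_map_eq_zero_of_map_map_eq_zero
    (hfst : ∀ x, (P x).fst = 0) (hsq : ∀ x, P (P x) = 0) : IsRotaBaxterOfWeightZero P := by
  intro x y
  rw [map_mul_add_mul_map P hfst, hsq, hsq, smul_zero, smul_zero, add_zero,
    mul_eq_smul_of_fst_eq_zero_right _ (hfst y), hfst, zero_smul]

end RotaBaxter

theorem weight_zero_iff_general {K : Type*} [Field K] [CharZero K] {n : ℕ}
    (P : TrivSqZeroExt K (Fin n → K) →ₗ[K] TrivSqZeroExt K (Fin n → K)) :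
    (∀ x y, P x * P y = P (x * P y + P x * y)) ↔
      (∀ x, (P x).fst = 0) ∧ (∀ x, P (P x) = 0) :=
  ⟨fun hP ↦ ⟨IsRotaBaxterOfWeightZero.fst_map_eq_zero P hP,
      IsRotaBaxterOfWeightZero.map_map_eq_zero P hP⟩,
    fun ⟨hfst, hsq⟩ ↦ isRotaBaxterOfWeightZero_of_fst_map_eq_zero_of_map_map_eq_zero P hfst hsq⟩

/-- a `K`-linear map `P` on the truncated polynomial algebra `R = K ⊕ V`
is a Rota–Baxter operator of weight zero iff `im P ⊆ V` and `P² = 0`. -/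
theorem weight_zero_iff {K : Type*} [Field K] [CharZero K] {n : ℕ} (hn : 1 ≤ n)
    (P : TrivSqZeroExt K (Fin n → K) →ₗ[K] TrivSqZeroExt K (Fin n → K)) :
    (∀ x y, P x * P y = P (x * P y + P x * y)) ↔
      (∀ x, (P x).fst = 0) ∧ (∀ x, P (P x) = 0) :=
  weight_zero_iff_general P
end

section
/- Let P : R → R be a Rota–Baxter operator of weight one on the truncated polynomial algebra R = K ⊕ V. Then P(1) is a scalar, and P(1) = 0 or P(1) = -1. -/
open TrivSqZeroExt

/-!
Write `P 1 = a + v` with `a ∈ K`, `v ∈ V`, and let `w = P v`. Since `V² = 0`, the scalar part of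
`P u * P u` is `(P u)₀²` on the left and `2 (P u)₀²` on the right, so `P` maps `V` into `V`.
Then the identity for `P 1 * P 1` gives `a (a + λ) = 0` and `λ v = -2 w`, and the identity for
`P 1 * P v` gives `a w = P w + (a + λ) w`. Applying `P` to `λ v = -2 w` gives `λ w = -2 P w`,
hence `λ w = 0`; for `λ ≠ 0` this forces `w = 0` and then `v = 0`.
-/

def IsRotaBaxter {K A : Type*} [CommRing K] [Ring A] [Algebra K A] (c : K) (P : A →ₗ[K] A) :
    Prop :=
  ∀ x y, P x * P y = P (x * P y + P x * y + c • (x * y))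

namespace IsRotaBaxter

variable {K M : Type*} [Field K] [AddCommGroup M] [Module K M] [Module Kᵐᵒᵖ M]
  [IsCentralScalar K M] {c : K} {P : TrivSqZeroExt K M →ₗ[K] TrivSqZeroExt K M}

theorem fst_map_inr (hP : IsRotaBaxter c P) (m : M) : fst (P (inr m)) = 0 := by
  have key := congrArg fst (hP (inr m) (inr m))
  have harg : inr m * P (inr m) + P (inr m) * inr m + c • (inr m * inr m)
      = (2 * fst (P (inr m))) • (inr m : TrivSqZeroExt K M) := by
    ext
    · simp
    · simp only [inr_mul_inr, smul_zero, add_zero, snd_add, snd_mul, fst_inr, zero_smul, snd_inr,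
        op_smul_eq_smul, zero_add, MulOpposite.op_zero, snd_smul]; module
  rw [harg, map_smul] at key
  simp only [fst_mul, fst_smul, smul_eq_mul] at key
  exact mul_self_eq_zero.mp (by linear_combination -key)

theorem map_inr (hP : IsRotaBaxter c P) (m : M) : P (inr m) = inr (snd (P (inr m))) := by
  ext
  · simp [hP.fst_map_inr m]
  · rfl

theorem map_one_mul_map_one (hP : IsRotaBaxter c P) :
    P 1 * P 1 = inl ((2 * fst (P 1) + c) * fst (P 1))
      + inr ((2 * fst (P 1) + c) • snd (P 1) + (2 : K) • snd (P (inr (snd (P 1))))) := by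
  have harg : (1 : TrivSqZeroExt K M) * P 1 + P 1 * 1 + c • (1 * 1)
      = (2 * fst (P 1) + c) • 1 + (2 : K) • inr (snd (P 1)) := by
    ext
    · simp only [one_mul, mul_one, fst_add, fst_smul, fst_one, smul_eq_mul, fst_inr, mul_zero,
        add_zero, add_left_inj]; ring
    · simp only [one_mul, mul_one, snd_add, snd_smul, snd_one, smul_zero, add_zero, snd_inr,
        zero_add]; module
  rw [hP, harg, map_add, map_smul, map_smul, hP.map_inr, ← inl_fst_add_inr_snd_eq (P 1)]
  ext <;> simp

theorem fst_map_one_mul_add_eq_zero (hP : IsRotaBaxter c P) :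
    fst (P 1) * (fst (P 1) + c) = 0 := by
  have key := congrArg fst hP.map_one_mul_map_one
  simp only [fst_mul, fst_add, fst_inl, fst_inr, add_zero] at key
  linear_combination -key

theorem smul_snd_map_one_eq (hP : IsRotaBaxter c P) :
    c • snd (P 1) = (-2 : K) • snd (P (inr (snd (P 1)))) := by
  have key := congrArg snd hP.map_one_mul_map_one
  simp only [snd_mul, snd_add, snd_inl, snd_inr, zero_add, op_smul_eq_smul] at key
  linear_combination (norm := module) -key

theorem snd_map_one_eq_zero (hP : IsRotaBaxter c P) (hc : c ≠ 0) : snd (P 1) = 0 := by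
  set a := fst (P 1)
  set v := snd (P 1)
  set w := snd (P (inr v))
  have hv : c • v = (-2 : K) • w := hP.smul_snd_map_one_eq
  have hw : c • w = (-2 : K) • snd (P (inr w)) := by
    simpa only [inr_smul, map_smul, snd_smul] using congrArg (fun m => snd (P (inr m))) hv
  have key := congrArg snd (hP 1 (inr v))
  have harg : 1 * inr w + P 1 * inr v + c • (1 * inr v) = inr w + (a + c) • inr v := by
    ext
    · simp
    · simp only [one_mul, snd_add, snd_inr, snd_mul, fst_inr, MulOpposite.op_zero, zero_smul,
        add_zero, snd_smul]; module
  rw [hP.map_inr v, harg, map_add, map_smul, hP.map_inr w] at key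
  simp only [snd_mul, snd_add, snd_smul, snd_inr, fst_inr, MulOpposite.op_zero, zero_smul,
    add_zero] at key
  have hcw : c • w = 0 := by linear_combination (norm := module) (-2 : K) • key - hw
  have hw0 : w = 0 := (smul_eq_zero.mp hcw).resolve_left hc
  rw [hw0, smul_zero] at hv
  exact (smul_eq_zero.mp hv).resolve_left hc

theorem map_one_eq_zero_or (hP : IsRotaBaxter c P) (hc : c ≠ 0) :
    P 1 = 0 ∨ P 1 = inl (-c) := by
  have hP1 : P 1 = inl (fst (P 1)) := by
    ext
    · rfl
    · exact hP.snd_map_one_eq_zero hc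
  rcases mul_eq_zero.mp hP.fst_map_one_mul_add_eq_zero with h | h
  · left
    rw [hP1, h, inl_zero]
  · right
    rw [hP1, eq_neg_of_add_eq_zero_left h]

end IsRotaBaxter

theorem weight_one_P_one_general {K : Type*} [Field K] {n : ℕ}
    (P : TrivSqZeroExt K (Fin n → K) →ₗ[K] TrivSqZeroExt K (Fin n → K))
    (hP : ∀ x y, P x * P y = P (x * P y + P x * y + (1 : K) • (x * y))) :
    P 1 = 0 ∨ P 1 = -1 := by
  have hRB : IsRotaBaxter (1 : K) P := hP
  simpa only [inl_neg, inl_one] using hRB.map_one_eq_zero_or one_ne_zero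

/-- if `P` is a Rota–Baxter operator of weight one on the truncated
polynomial algebra `R = K ⊕ V`, then `P 1` is a scalar, and `P 1 = 0` or `P 1 = -1`. -/
theorem weight_one_P_one {K : Type*} [Field K] [CharZero K] {n : ℕ} (hn : 1 ≤ n)
    (P : TrivSqZeroExt K (Fin n → K) →ₗ[K] TrivSqZeroExt K (Fin n → K))
    (hP : ∀ x y, P x * P y = P (x * P y + P x * y + (1 : K) • (x * y))) :
    P 1 = 0 ∨ P 1 = -1 :=
  weight_one_P_one_general P hP
end
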